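/- Let G be a group, n a positive integer, and φ : M → N a morphism of G-modules such that M and N are both n-divisible and φ restricts to an isomorphism of G-modules M[n] → N[n]. Then the kernel of the induced homomorphism H^1(G, M)[n] → H^1(G, N)[n] between n-torsion subgroups of first cohomology is isomorphic, as an abelian group, to the cokernel of the induced homomorphism M^G/n·M^G → N^G/n·N^G. -/

import Mathlib

/-! Basic definitions: fixed points, n-torsion, first group cohomology of a
`G`-module (an abelian group with a `DistribMulAction` of `G`), functoriality,
and the Kummer-theoretic connecting cocycle. -/

section Defs

variable (G : Type) [Group G]

/-- The subgroup of `G`-fixed points of a `G`-module `M`. -/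
def fixedAddSubgroup (M : Type) [AddCommGroup M] [DistribMulAction G M] :
    AddSubgroup M where
  carrier := {x | ∀ g : G, g • x = x}
  zero_mem' := fun g => smul_zero g
  add_mem' := fun {a b} ha hb g => by rw [smul_add, ha g, hb g]
  neg_mem' := fun {a} ha g => by rw [smul_neg, ha g]

/-- The `n`-torsion subgroup `A[n]` of an abelian group `A`. -/
def nTorsion (A : Type) [AddCommGroup A] (n : ℕ) : AddSubgroup A where
  carrier := {x | n • x = 0}
  zero_mem' := smul_zero n
  add_mem' := fun {a b} ha hb => by
    have ha' : n • a = 0 := ha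
    have hb' : n • b = 0 := hb
    show n • (a + b) = 0
    rw [smul_add, ha', hb', add_zero]
  neg_mem' := fun {a} ha => by
    have ha' : n • a = 0 := ha
    show n • (-a) = 0
    rw [smul_neg, ha', neg_zero]

/-- The multiplication-by-`n` homomorphism of an abelian group. -/
def nsmulHom (A : Type) [AddCommGroup A] (n : ℕ) : A →+ A where
  toFun x := n • x
  map_zero' := smul_zero n
  map_add' := smul_add n

/-- The subgroup `n·A` of an abelian group `A`. -/
def nMultiples (A : Type) [AddCommGroup A] (n : ℕ) : AddSubgroup A :=
  (nsmulHom A n).range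

variable (M : Type) [AddCommGroup M] [DistribMulAction G M]

/-- The induced `G`-action on the `n`-torsion subgroup. -/
instance nTorsionAction (n : ℕ) : DistribMulAction G (nTorsion M n) where
  smul g x := ⟨g • (x : M), by
    have hx : n • (x : M) = 0 := x.2
    show n • (g • (x : M)) = 0
    rw [← smul_comm g n (x : M), hx, smul_zero]⟩
  one_smul x := Subtype.ext (one_smul G (x : M))
  mul_smul g h x := Subtype.ext (mul_smul g h (x : M))
  smul_zero g := Subtype.ext (smul_zero g)
  smul_add g x y := Subtype.ext (smul_add g (x : M) (y : M))

@[simp] lemma nTorsion_smul_coe (n : ℕ) (g : G) (x : nTorsion M n) :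
    ((g • x : nTorsion M n) : M) = g • (x : M) := rfl

/-- The group of (inhomogeneous) 1-cocycles of `G` with coefficients in `M`. -/
def oneCocycles : AddSubgroup (G → M) where
  carrier := {f | ∀ σ τ : G, f (σ * τ) = f σ + σ • f τ}
  zero_mem' := fun σ τ => by simp
  add_mem' := fun {a b} ha hb σ τ => by
    simp only [Pi.add_apply, ha σ τ, hb σ τ, smul_add]
    abel
  neg_mem' := fun {a} ha σ τ => by
    simp only [Pi.neg_apply, ha σ τ, smul_neg]
    abel

/-- The group of 1-coboundaries of `G` with coefficients in `M`. -/
def oneCoboundaries : AddSubgroup (G → M) where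
  carrier := {f | ∃ x : M, ∀ σ : G, f σ = σ • x - x}
  zero_mem' := ⟨0, fun σ => by simp⟩
  add_mem' := by
    rintro a b ⟨x, hx⟩ ⟨y, hy⟩
    exact ⟨x + y, fun σ => by rw [Pi.add_apply, hx σ, hy σ, smul_add]; abel⟩
  neg_mem' := by
    rintro a ⟨x, hx⟩
    exact ⟨-x, fun σ => by rw [Pi.neg_apply, hx σ, smul_neg]; abel⟩

/-- The first group cohomology `H¹(G, M)`, defined as 1-cocycles modulo
1-coboundaries. -/
abbrev H1 := oneCocycles G M ⧸ ((oneCoboundaries G M).addSubgroupOf (oneCocycles G M))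

/-- The class of a 1-cocycle in `H¹(G, M)`. -/
def H1mk : oneCocycles G M → H1 G M := QuotientAddGroup.mk

variable {G M}
variable {N : Type} [AddCommGroup N] [DistribMulAction G N]

/-- The map on 1-cocycles induced by a `G`-equivariant homomorphism. -/
def oneCocyclesMap (φ : M →+ N) (hφ : ∀ (g : G) (x : M), φ (g • x) = g • φ x) :
    oneCocycles G M →+ oneCocycles G N where
  toFun f := ⟨fun σ => φ ((f : G → M) σ), fun σ τ => by
    show φ ((f : G → M) (σ * τ)) = φ ((f : G → M) σ) + σ • φ ((f : G → M) τ)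
    rw [f.2 σ τ, map_add, hφ]⟩
  map_zero' := by
    apply Subtype.ext
    funext σ
    simp
  map_add' f₁ f₂ := by
    apply Subtype.ext
    funext σ
    simp

/-- The map on `H¹` induced by a `G`-equivariant homomorphism. -/
def H1Map (φ : M →+ N) (hφ : ∀ (g : G) (x : M), φ (g • x) = g • φ x) :
    H1 G M →+ H1 G N :=
  QuotientAddGroup.map _ _ (oneCocyclesMap φ hφ) (by
    rintro ⟨f, hf⟩ hmem
    rw [AddSubgroup.mem_addSubgroupOf] at hmem
    obtain ⟨x, hx⟩ := hmem
    rw [AddSubgroup.mem_comap, AddSubgroup.mem_addSubgroupOf]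
    refine ⟨φ x, fun σ => ?_⟩
    show φ (f σ) = σ • φ x - φ x
    have hx' : f σ = σ • x - x := hx σ
    rw [hx', map_sub, hφ])

variable (G M)

/-- The Kummer cocycle attached to `y` with `n • y` a fixed point: the 1-cocycle
`σ ↦ σ • y - y` with values in the `n`-torsion of `M`. -/
def kummerCocycle (n : ℕ) (y : M) (hy : (n • y) ∈ fixedAddSubgroup G M) :
    oneCocycles G (nTorsion M n) :=
  ⟨fun σ => ⟨σ • y - y, by
      show n • (σ • y - y) = 0
      rw [smul_sub, ← smul_comm σ n y, hy σ, sub_self]⟩,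
   fun σ τ => by
      apply Subtype.ext
      show (σ * τ) • y - y = (σ • y - y) + σ • (τ • y - y)
      rw [mul_smul, smul_sub]
      abel⟩

end Defs
section Maps

variable {G : Type} [Group G]

/-- A homomorphism of abelian groups restricts to the `n`-torsion subgroups. -/
def torsMap {A B : Type} [AddCommGroup A] [AddCommGroup B] (n : ℕ) (f : A →+ B) :
    ↥(nTorsion A n) →+ ↥(nTorsion B n) where
  toFun x := ⟨f (x : A), by
    have hx : n • (x : A) = 0 := x.2
    show n • f (x : A) = 0
    rw [← map_nsmul f, hx, map_zero]⟩
  map_zero' := Subtype.ext (map_zero f)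
  map_add' a b := Subtype.ext (map_add f (a : A) (b : A))

/-- A `G`-equivariant homomorphism restricts to the subgroups of fixed
points. -/
def fixedMap {M N : Type} [AddCommGroup M] [DistribMulAction G M]
    [AddCommGroup N] [DistribMulAction G N]
    (φ : M →+ N) (hφ : ∀ (g : G) (x : M), φ (g • x) = g • φ x) :
    ↥(fixedAddSubgroup G M) →+ ↥(fixedAddSubgroup G N) where
  toFun x := ⟨φ (x : M), fun g => by
    have hx : ∀ g : G, g • (x : M) = (x : M) := x.2
    rw [← hφ g (x : M), hx g]⟩
  map_zero' := Subtype.ext (map_zero φ)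
  map_add' a b := Subtype.ext (map_add φ (a : M) (b : M))

end Maps

/-! Both sides are quotients of `P = {y ∈ N | n • y ∈ N^G}`. Multiplication by `n` maps `P`
onto `N^G` since `N` is `n`-divisible. The Kummer cocycle `σ ↦ σ • y - y` of `y ∈ P` takes
values in `N[n] ≅ M[n]`; read in `M`, its class lies in the kernel of
`H¹(G, M)[n] → H¹(G, N)[n]`, and every class of that kernel arises this way because `M` is
`n`-divisible. Finally, both maps out of `P` have the same kernel, namely the `y` of the form
`c + φ x` with `c ∈ N^G` and `n • x ∈ M^G`. -/

section Kummer

variable {G M N : Type} [Group G] [AddCommGroup M] [DistribMulAction G M]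
  [AddCommGroup N] [DistribMulAction G N] {n : ℕ}

lemma mem_fixedAddSubgroup {x : M} : x ∈ fixedAddSubgroup G M ↔ ∀ g : G, g • x = x := Iff.rfl

lemma H1mk_eq_H1mk_iff (f f' : oneCocycles G M) :
    H1mk G M f = H1mk G M f' ↔ ∃ x : M, ∀ σ : G, (f : G → M) σ - (f' : G → M) σ = σ • x - x := by
  rw [H1mk, QuotientAddGroup.eq_iff_sub_mem, AddSubgroup.mem_addSubgroupOf]
  rfl

lemma H1mk_eq_zero_iff (f : oneCocycles G M) :
    H1mk G M f = 0 ↔ ∃ x : M, ∀ σ : G, (f : G → M) σ = σ • x - x := by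
  rw [H1mk, QuotientAddGroup.eq_zero_iff, AddSubgroup.mem_addSubgroupOf]
  rfl

variable (G M n) in
def kummerDomain : AddSubgroup M :=
  (fixedAddSubgroup G M).comap (nsmulHom M n)

lemma mem_kummerDomain_iff {y : M} :
    y ∈ kummerDomain G M n ↔ ∀ σ : G, n • (σ • y - y) = 0 := by
  refine forall_congr' fun σ => ?_
  rw [smul_sub, ← smul_comm σ n y, sub_eq_zero]
  rfl

variable (G M n) in
def kummerNsmul : kummerDomain G M n →+ fixedAddSubgroup G M :=
  ((nsmulHom M n).comp (kummerDomain G M n).subtype).codRestrict _ fun y => y.2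

lemma kummerNsmul_surjective (hdiv : ∀ x : M, ∃ y : M, n • y = x) :
    Function.Surjective (kummerNsmul G M n) := by
  rintro ⟨x, hx⟩
  obtain ⟨y, rfl⟩ := hdiv x
  exact ⟨⟨y, hx⟩, rfl⟩

variable (G M n) in
def kummerHom : kummerDomain G M n →+ oneCocycles G (nTorsion M n) where
  toFun y := kummerCocycle G M n y y.2
  map_zero' := by
    ext σ
    simp [kummerCocycle]
  map_add' y z := by
    ext σ
    simp only [kummerCocycle, AddSubgroup.coe_add, smul_add, Pi.add_apply]
    abel

variable {φ : M →+ N} (hφ : ∀ (g : G) (x : M), φ (g • x) = g • φ x)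
  (hbij : Set.BijOn φ (nTorsion M n : Set M) (nTorsion N n : Set N))

noncomputable def nTorsionEquiv : nTorsion M n ≃+ nTorsion N n :=
  AddEquiv.ofBijective (torsMap n φ) hbij.bijective

@[simp] lemma coe_nTorsionEquiv (u : nTorsion M n) : (nTorsionEquiv hbij u : N) = φ u := rfl

@[simp] lemma map_coe_nTorsionEquiv_symm (u : nTorsion N n) :
    φ ((nTorsionEquiv hbij).symm u) = u :=
  congrArg Subtype.val ((nTorsionEquiv hbij).apply_symm_apply u)

include hφ in
lemma nTorsionEquiv_symm_smul (g : G) (u : nTorsion N n) :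
    (nTorsionEquiv hbij).symm (g • u) = g • (nTorsionEquiv hbij).symm u := by
  apply (nTorsionEquiv hbij).injective
  ext
  simp only [AddEquiv.apply_symm_apply, nTorsion_smul_coe, coe_nTorsionEquiv, hφ,
    map_coe_nTorsionEquiv_symm]

noncomputable def kummerPullback : kummerDomain G N n →+ oneCocycles G M :=
  (oneCocyclesMap ((nTorsion M n).subtype.comp (nTorsionEquiv hbij).symm.toAddMonoidHom)
    fun g u => congrArg Subtype.val (nTorsionEquiv_symm_smul hφ hbij g u)).comp
    (kummerHom G N n)

lemma kummerPullback_apply_eq_iff (y : kummerDomain G N n) (σ : G) (m : M) :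
    (kummerPullback hφ hbij y : G → M) σ = m ↔ n • m = 0 ∧ φ m = σ • (y : N) - y := by
  constructor
  · rintro rfl
    exact ⟨((nTorsionEquiv hbij).symm _).2, map_coe_nTorsionEquiv_symm hbij _⟩
  · rintro ⟨hm, hφm⟩
    exact hbij.injOn ((nTorsionEquiv hbij).symm _).2 hm
      ((map_coe_nTorsionEquiv_symm hbij _).trans hφm.symm)

lemma nsmul_kummerPullback (y : kummerDomain G N n) : n • kummerPullback hφ hbij y = 0 := by
  ext σ
  exact ((kummerPullback_apply_eq_iff hφ hbij y σ _).1 rfl).1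

lemma H1Map_H1mk_kummerPullback (y : kummerDomain G N n) :
    H1Map φ hφ (H1mk G M (kummerPullback hφ hbij y)) = 0 := by
  refine (H1mk_eq_zero_iff _).2 ⟨y, fun σ => ?_⟩
  exact ((kummerPullback_apply_eq_iff hφ hbij y σ _).1 rfl).2

noncomputable def kummerBoundary :
    kummerDomain G N n →+ (torsMap n (H1Map (G := G) φ hφ)).ker :=
  ((((QuotientAddGroup.mk' _).comp (kummerPullback hφ hbij)).codRestrict (nTorsion (H1 G M) n)
    fun y => by
      show n • QuotientAddGroup.mk' _ _ = 0
      rw [← map_nsmul, nsmul_kummerPullback, map_zero]).codRestrict _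
    fun y => Subtype.ext (H1Map_H1mk_kummerPullback hφ hbij y))

lemma coe_kummerBoundary (y : kummerDomain G N n) :
    ((kummerBoundary hφ hbij y : nTorsion (H1 G M) n) : H1 G M) =
      H1mk G M (kummerPullback hφ hbij y) := rfl


lemma kummerBoundary_eq_zero_iff (y : kummerDomain G N n) :
    kummerBoundary hφ hbij y = 0 ↔
      ∃ x ∈ kummerDomain G M n, (y : N) - φ x ∈ fixedAddSubgroup G N := by
  have hzero : kummerBoundary hφ hbij y = 0 ↔ H1mk G M (kummerPullback hφ hbij y) = 0 := by
    rw [← coe_kummerBoundary, Subtype.ext_iff, Subtype.ext_iff]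
    rfl
  rw [hzero, H1mk_eq_zero_iff]
  refine exists_congr fun x => ?_
  rw [mem_kummerDomain_iff, mem_fixedAddSubgroup, ← forall_and]
  refine forall_congr' fun σ => ?_
  rw [kummerPullback_apply_eq_iff, map_sub, hφ, eq_comm (a := σ • φ x - φ x),
    sub_eq_sub_iff_sub_eq_sub, ← smul_sub]

lemma kummerBoundary_surjective (hdivM : ∀ x : M, ∃ y : M, n • y = x) :
    Function.Surjective (kummerBoundary hφ hbij) := by
  rintro ⟨⟨c, hc⟩, hker⟩
  obtain ⟨f, rfl⟩ := QuotientAddGroup.mk_surjective c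
  have hnf : H1mk G M (n • f) = 0 := (map_nsmul (QuotientAddGroup.mk' _) n f).trans hc
  obtain ⟨x, hx⟩ := (H1mk_eq_zero_iff (n • f)).1 hnf
  obtain ⟨z, hz⟩ := (H1mk_eq_zero_iff (oneCocyclesMap φ hφ f)).1 (congrArg Subtype.val hker)
  obtain ⟨w, rfl⟩ := hdivM x
  set u : G → M := fun σ => (f : G → M) σ - (σ • w - w)
  have hu_tors (σ : G) : n • u σ = 0 := by
    have hxσ : n • (f : G → M) σ = σ • (n • w) - n • w := hx σ
    rw [smul_sub, hxσ, smul_sub, smul_comm n σ w, sub_self]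
  have hu_map (σ : G) : φ (u σ) = σ • (z - φ w) - (z - φ w) := by
    have hzσ : φ ((f : G → M) σ) = σ • z - z := hz σ
    rw [map_sub, map_sub, hφ, hzσ, smul_sub]
    abel
  have hy : z - φ w ∈ kummerDomain G N n := mem_kummerDomain_iff.2 fun σ => by
    rw [← hu_map, ← map_nsmul, hu_tors, map_zero]
  refine ⟨⟨z - φ w, hy⟩, Subtype.ext (Subtype.ext ?_)⟩
  refine (H1mk_eq_H1mk_iff _ f).2 ⟨-w, fun σ => ?_⟩
  rw [(kummerPullback_apply_eq_iff hφ hbij _ σ (u σ)).2 ⟨hu_tors σ, hu_map σ⟩, smul_neg]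
  show (f : G → M) σ - (σ • w - w) - (f : G → M) σ = -(σ • w) - -w
  abel

include hbij in
lemma kummerNsmul_mem_iff (hdivM : ∀ x : M, ∃ y : M, n • y = x) (y : kummerDomain G N n) :
    kummerNsmul G N n y ∈ nMultiples (fixedAddSubgroup G N) n ⊔ (fixedMap φ hφ).range ↔
      ∃ x ∈ kummerDomain G M n, (y : N) - φ x ∈ fixedAddSubgroup G N := by
  rw [AddSubgroup.mem_sup]
  constructor
  · rintro ⟨_, ⟨c, rfl⟩, _, ⟨m, rfl⟩, hsum⟩
    have hsum' : n • (c : N) + φ m = n • (y : N) := congrArg Subtype.val hsum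
    obtain ⟨x, hx⟩ := hdivM m
    have htors : n • ((y : N) - c - φ x) = 0 := by
      rw [smul_sub, smul_sub, ← map_nsmul, hx, ← hsum']
      abel
    obtain ⟨t, ht, hφt⟩ := hbij.surjOn htors
    refine ⟨x + t, ?_, ?_⟩
    · show n • (x + t) ∈ fixedAddSubgroup G M
      rw [smul_add, hx, show n • t = 0 from ht, add_zero]
      exact m.2
    · rw [map_add, hφt, show (y : N) - (φ x + ((y : N) - c - φ x)) = c by abel]
      exact c.2
  · rintro ⟨x, hx, hc⟩
    refine ⟨_, ⟨⟨_, hc⟩, rfl⟩, _, ⟨⟨n • x, hx⟩, rfl⟩, Subtype.ext ?_⟩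
    show n • ((y : N) - φ x) + φ (n • x) = n • (y : N)
    rw [map_nsmul, smul_sub, sub_add_cancel]

end Kummer

theorem ker_H1_torsion_map_iso_coker_general
    (G M N : Type) [Group G] [AddCommGroup M] [DistribMulAction G M]
    [AddCommGroup N] [DistribMulAction G N] (n : ℕ)
    (φ : M →+ N) (hφ : ∀ (g : G) (x : M), φ (g • x) = g • φ x)
    (hdivM : ∀ x : M, ∃ y : M, n • y = x) (hdivN : ∀ x : N, ∃ y : N, n • y = x)
    (hbij : Set.BijOn φ (nTorsion M n : Set M) (nTorsion N n : Set N)) :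
    Nonempty (↥((torsMap n (H1Map (G := G) φ hφ)).ker) ≃+
      (↥(fixedAddSubgroup G N) ⧸
        (nMultiples ↥(fixedAddSubgroup G N) n ⊔ (fixedMap φ hφ).range))) := by
  set S := nMultiples (fixedAddSubgroup G N) n ⊔ (fixedMap φ hφ).range
  have hker : (kummerBoundary hφ hbij).ker =
      ((QuotientAddGroup.mk' S).comp (kummerNsmul G N n)).ker := by
    ext y
    rw [AddMonoidHom.mem_ker, AddMonoidHom.mem_ker, kummerBoundary_eq_zero_iff,
      AddMonoidHom.comp_apply, QuotientAddGroup.mk'_apply, QuotientAddGroup.eq_zero_iff,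
      kummerNsmul_mem_iff hφ hbij hdivM]
  exact ⟨(QuotientAddGroup.quotientKerEquivOfSurjective _
      (kummerBoundary_surjective hφ hbij hdivM)).symm.trans <|
    (QuotientAddGroup.quotientAddEquivOfEq hker).trans <|
    QuotientAddGroup.quotientKerEquivOfSurjective _ <|
      (QuotientAddGroup.mk'_surjective S).comp (kummerNsmul_surjective hdivN)⟩

/-- Let `φ : M → N` be a morphism of `n`-divisible `G`-modules
restricting to an isomorphism `M[n] → N[n]`. Then the kernel of the induced
homomorphism `H¹(G, M)[n] → H¹(G, N)[n]` is isomorphic to the cokernel of the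
induced homomorphism `M^G/n·M^G → N^G/n·N^G`, i.e. to
`N^G / (n·N^G + φ(M^G))`. -/
theorem ker_H1_torsion_map_iso_coker
    (G M N : Type) [Group G] [AddCommGroup M] [DistribMulAction G M]
    [AddCommGroup N] [DistribMulAction G N] (n : ℕ) (hn : 0 < n)
    (φ : M →+ N) (hφ : ∀ (g : G) (x : M), φ (g • x) = g • φ x)
    (hdivM : ∀ x : M, ∃ y : M, n • y = x) (hdivN : ∀ x : N, ∃ y : N, n • y = x)
    (hbij : Set.BijOn φ (nTorsion M n : Set M) (nTorsion N n : Set N)) :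
    Nonempty (↥((torsMap n (H1Map (G := G) φ hφ)).ker) ≃+
      (↥(fixedAddSubgroup G N) ⧸
        (nMultiples ↥(fixedAddSubgroup G N) n ⊔ (fixedMap φ hφ).range))) :=
  ker_H1_torsion_map_iso_coker_general G M N n φ hφ hdivM hdivN hbij
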